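/- Let A, B be real parameters and let H₁(y₁,y₂,x₁,x₂) = (1/2)(x₁² + x₂²) + (1/2)(A y₁² + B y₂²) + y₁² y₂ + 2 y₂³ be the Hénon-Heiles Hamiltonian with ε = 6. Then the function H₂ = y₁⁴ + 4 y₁² y₂² − 4 x₁² y₂ + 4 x₁ x₂ y₁ + 4 A y₁² y₂ + (4A − B) x₁² + A(4A − B) y₁² satisfies {H₁, H₂} = 0, where {F,G} = (∂F/∂x₁)(∂G/∂y₁) + (∂F/∂x₂)(∂G/∂y₂) − (∂F/∂y₁)(∂G/∂x₁) − (∂F/∂y₂)(∂G/∂x₂) is the canonical Poisson bracket on ℝ⁴ with coordinates (y₁,y₂,x₁,x₂). -/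

import Mathlib

/-! The cubic coefficient `ε` enters `{H, H₂}` only through `∂H/∂y₂ ∋ ε y₂²`, which is paired
with `∂H₂/∂x₂ = 4 x₁ y₁`. All other terms cancel identically, leaving
`{H, H₂} = 4 (6 − ε) x₁ y₁ y₂²`, which vanishes exactly at `ε = 6`. -/

/-- Canonical Poisson bracket on ℝ⁴ with coordinates (y₁,y₂,x₁,x₂), for functions
given in curried form `F y₁ y₂ x₁ x₂`. -/
noncomputable def poissonBracket4 (F G : ℝ → ℝ → ℝ → ℝ → ℝ) (y₁ y₂ x₁ x₂ : ℝ) : ℝ :=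
    (deriv (fun t => F y₁ y₂ t x₂) x₁) * (deriv (fun t => G t y₂ x₁ x₂) y₁)
  + (deriv (fun t => F y₁ y₂ x₁ t) x₂) * (deriv (fun t => G y₁ t x₁ x₂) y₂)
  - (deriv (fun t => F t y₂ x₁ x₂) y₁) * (deriv (fun t => G y₁ y₂ t x₂) x₁)
  - (deriv (fun t => F y₁ t x₁ x₂) y₂) * (deriv (fun t => G y₁ y₂ x₁ t) x₂)

noncomputable def henonHeiles (A B ε : ℝ) (y₁ y₂ x₁ x₂ : ℝ) : ℝ :=
  (1/2) * (x₁^2 + x₂^2) + (1/2) * (A * y₁^2 + B * y₂^2) + y₁^2 * y₂ + ε/3 * y₂^3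

def henonHeilesSecondIntegral (A B : ℝ) (y₁ y₂ x₁ x₂ : ℝ) : ℝ :=
  y₁^4 + 4 * y₁^2 * y₂^2 - 4 * x₁^2 * y₂ + 4 * x₁ * x₂ * y₁ + 4 * A * y₁^2 * y₂
    + (4 * A - B) * x₁^2 + A * (4 * A - B) * y₁^2

theorem poissonBracket4_henonHeiles_secondIntegral (A B ε y₁ y₂ x₁ x₂ : ℝ) :
    poissonBracket4 (henonHeiles A B ε) (henonHeilesSecondIntegral A B) y₁ y₂ x₁ x₂
      = 4 * (6 - ε) * x₁ * y₁ * y₂^2 := by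
  simp only [poissonBracket4, henonHeiles, henonHeilesSecondIntegral]
  simp (disch := fun_prop) only [deriv_fun_add, deriv_fun_sub, deriv_const, deriv_pow_field,
    deriv_const_mul_field, deriv_mul_const_field, deriv_const_mul_id]
  ring

theorem henonHeiles_case_i_commutes (A B : ℝ) :
    ∀ y₁ y₂ x₁ x₂ : ℝ,
      poissonBracket4
        (fun y₁ y₂ x₁ x₂ =>
          (1/2) * (x₁^2 + x₂^2) + (1/2) * (A * y₁^2 + B * y₂^2) + y₁^2 * y₂ + 2 * y₂^3)
        (fun y₁ y₂ x₁ x₂ =>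
          y₁^4 + 4 * y₁^2 * y₂^2 - 4 * x₁^2 * y₂ + 4 * x₁ * x₂ * y₁ + 4 * A * y₁^2 * y₂
            + (4 * A - B) * x₁^2 + A * (4 * A - B) * y₁^2)
        y₁ y₂ x₁ x₂ = 0 := by
  intro y₁ y₂ x₁ x₂
  have hH : henonHeiles A B 6 = fun y₁ y₂ x₁ x₂ =>
      (1/2) * (x₁^2 + x₂^2) + (1/2) * (A * y₁^2 + B * y₂^2) + y₁^2 * y₂ + 2 * y₂^3 := by
    funext y₁ y₂ x₁ x₂
    norm_num [henonHeiles]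
  rw [← hH]
  exact (poissonBracket4_henonHeiles_secondIntegral A B 6 y₁ y₂ x₁ x₂).trans (by ring)
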